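/- Let N' > 2 and τ > −2, and define f(p) = p·((2+τ)/(p−1))·(N'−2−(2+τ)/(p−1)) for p > 1. Then f((N'+τ)/(N'−2)) = 0; the equation f(p) = (N'−2)²/4 has a solution P_−(N',τ) in the interval ((N'+τ)/(N'−2), (N'+2+2τ)/(N'−2)). If 2 < N' ≤ 10 + 4τ, then f(p) < (N'−2)²/4 for 1 < p < P_−(N',τ) and f(p) > (N'−2)²/4 for p > P_−(N',τ). If N' > 10 + 4τ, then the equation f(p) = (N'−2)²/4 has a second root P_+(N',τ) in (1,∞) satisfying (N'+2+2τ)/(N'−2) < P_+(N',τ) < ∞, and f(p) < (N'−2)²/4 for p ∈ (1, P_−(N',τ)) ∪ (P_+(N',τ), ∞) while f(p) > (N'−2)²/4 for p ∈ (P_−(N',τ), P_+(N',τ)). -/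

import Mathlib

/-
Clearing denominators, `(N'-2)²/4 - f(p) = Q(p) / (4(p-1)²)` for the quadratic
`Q(p) = a p² - b p + c`, so for `p > 1` comparing `f(p)` with `(N'-2)²/4` is reading off the sign
of `Q`, whose roots are `P₋` and `P₊` (for `a = 0`, `Q` is linear with root `4/3`). The roots are
located by the values `Q(1) = 4(2+τ)² > 0`, `Q((N'+τ)/(N'-2)) = (2+τ)² > 0` and
`Q((N'+2+2τ)/(N'-2)) = -8(2+τ)³/(N'-2) < 0`, together with the sign of
`a (P₊ - P₋) = 4(2+τ)√((2+τ)(2N'+τ-2))`.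
-/
open Set Filter

noncomputable section

/-- `f(p) = p ((2+τ)/(p-1)) (N'-2-(2+τ)/(p-1))`. -/
def fF (N' τ p : ℝ) : ℝ := p * ((2 + τ) / (p - 1)) * (N' - 2 - (2 + τ) / (p - 1))

/-- `P₊(N',τ)` (defined for `N' ≠ 4τ + 10`). -/
def Pplus (N' τ : ℝ) : ℝ :=
  ((N' - 2) ^ 2 - 2 * (2 + τ) * (N' + τ)
      + 2 * (2 + τ) * Real.sqrt ((2 + τ) * (2 * N' + τ - 2)))
    / ((N' - 2) * (N' - 4 * τ - 10))

/-- `P₋(N',τ)`, with `P₋ = 4/3` in the degenerate case `N' = 4τ + 10`. -/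
def Pminus (N' τ : ℝ) : ℝ :=
  if N' = 4 * τ + 10 then 4 / 3 else
    ((N' - 2) ^ 2 - 2 * (2 + τ) * (N' + τ)
        - 2 * (2 + τ) * Real.sqrt ((2 + τ) * (2 * N' + τ - 2)))
      / ((N' - 2) * (N' - 4 * τ - 10))

def quadF (N' τ p : ℝ) : ℝ :=
  (N' - 2) * (N' - 4 * τ - 10) * p ^ 2
    - (2 * (N' - 2) ^ 2 - 4 * (2 + τ) * (N' + τ)) * p + (N' - 2) ^ 2

theorem mem_Ioo_of_mul_sub_neg {x u v : ℝ} (huv : u ≤ v) (h : (x - u) * (x - v) < 0) :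
    x ∈ Ioo u v := by
  constructor <;> nlinarith

theorem lt_or_lt_of_mul_sub_pos {x u v : ℝ} (h : 0 < (x - u) * (x - v)) :
    x < u ∨ v < x := by
  by_contra! h'
  nlinarith

section

variable {N' τ p : ℝ}

theorem sub_fF_eq_quadF_div (hp : p ≠ 1) :
    (N' - 2) ^ 2 / 4 - fF N' τ p = quadF N' τ p / (4 * (p - 1) ^ 2) := by
  have : p - 1 ≠ 0 := sub_ne_zero.2 hp
  rw [fF, quadF]
  field_simp
  ring

theorem fF_lt_iff (hp : 1 < p) : fF N' τ p < (N' - 2) ^ 2 / 4 ↔ 0 < quadF N' τ p := by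
  have : 0 < p - 1 := sub_pos.2 hp
  rw [← sub_pos, sub_fF_eq_quadF_div hp.ne', div_pos_iff_of_pos_right (by positivity)]

theorem lt_fF_iff (hp : 1 < p) : (N' - 2) ^ 2 / 4 < fF N' τ p ↔ quadF N' τ p < 0 := by
  have : 0 < p - 1 := sub_pos.2 hp
  rw [← sub_neg, sub_fF_eq_quadF_div hp.ne', div_lt_iff₀ (by positivity), zero_mul]

theorem fF_eq_iff (hp : 1 < p) : fF N' τ p = (N' - 2) ^ 2 / 4 ↔ quadF N' τ p = 0 := by
  have : 0 < p - 1 := sub_pos.2 hp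
  have : 4 * (p - 1) ^ 2 ≠ 0 := by positivity
  rw [eq_comm, ← sub_eq_zero, sub_fF_eq_quadF_div hp.ne', div_eq_zero_iff, or_iff_left this]

theorem quadF_one : quadF N' τ 1 = 4 * (2 + τ) ^ 2 := by
  rw [quadF]; ring

theorem quadF_zero_point (hN : N' ≠ 2) : quadF N' τ ((N' + τ) / (N' - 2)) = (2 + τ) ^ 2 := by
  have : N' - 2 ≠ 0 := sub_ne_zero.2 hN
  rw [quadF]; field_simp; ring

-- `(N'+2+2τ)/(N'-2)` is where `(2+τ)/(p-1) = (N'-2)/2`, the maximiser of `y ↦ y (N'-2-y)`.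
theorem quadF_peak_point (hN : N' ≠ 2) :
    quadF N' τ ((N' + 2 + 2 * τ) / (N' - 2)) = -8 * (2 + τ) ^ 3 / (N' - 2) := by
  have : N' - 2 ≠ 0 := sub_ne_zero.2 hN
  rw [quadF]; field_simp; ring

theorem fF_zero_point (hN : N' ≠ 2) : fF N' τ ((N' + τ) / (N' - 2)) = 0 := by
  have hN2 : N' - 2 ≠ 0 := sub_ne_zero.2 hN
  have hsub : (N' + τ) / (N' - 2) - 1 = (2 + τ) / (N' - 2) := by field_simp; ring
  rcases eq_or_ne (2 + τ) 0 with hτ | hτ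
  · simp [fF, hτ]
  · simp [fF, hsub, div_div_cancel₀ hτ, hN2]

theorem quadF_eq_mul (hD : 0 ≤ (2 + τ) * (2 * N' + τ - 2))
    (ha : (N' - 2) * (N' - 4 * τ - 10) ≠ 0) (p : ℝ) :
    quadF N' τ p = (N' - 2) * (N' - 4 * τ - 10) * (p - Pminus N' τ) * (p - Pplus N' τ) := by
  have hne : N' ≠ 4 * τ + 10 := fun h => ha (by rw [h]; ring)
  have hR := Real.sq_sqrt hD
  rw [quadF, Pminus, if_neg hne, Pplus]
  set a := (N' - 2) * (N' - 4 * τ - 10)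
  field_simp
  linear_combination 4 * (2 + τ) ^ 2 * hR

theorem Pplus_sub_Pminus (hne : N' ≠ 4 * τ + 10) :
    Pplus N' τ - Pminus N' τ
      = 4 * (2 + τ) * Real.sqrt ((2 + τ) * (2 * N' + τ - 2)) / ((N' - 2) * (N' - 4 * τ - 10)) := by
  rw [Pminus, if_neg hne, Pplus]
  ring

theorem quadF_eq_mul_of_eq (h : N' = 4 * τ + 10) :
    quadF N' τ p = 12 * (2 + τ) ^ 2 * (Pminus N' τ - p) := by
  rw [Pminus, if_pos h, quadF, h]; ring

theorem quadF_eq_pos_mul_sub (hN' : 2 < N') (hτ : -2 < τ) (hle : N' ≤ 10 + 4 * τ) (hp : 1 ≤ p) :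
    ∃ k > 0, quadF N' τ p = k * (Pminus N' τ - p) := by
  have hτ' : 0 < 2 + τ := by linarith
  rcases hle.lt_or_eq with hlt | heq
  · have hD : 0 < (2 + τ) * (2 * N' + τ - 2) := mul_pos (by linarith) (by linarith)
    have ha : (N' - 2) * (N' - 4 * τ - 10) < 0 := mul_neg_of_pos_of_neg (by linarith) (by linarith)
    have hQ := quadF_eq_mul hD.le ha.ne
    have hPP : Pplus N' τ < Pminus N' τ := by
      rw [← sub_neg, Pplus_sub_Pminus (by linarith)]
      exact div_neg_of_pos_of_neg (by have := Real.sqrt_pos.2 hD; positivity) ha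
    -- `quadF 1 > 0` puts `1` between the two roots
    have hPplus : Pplus N' τ < 1 := by
      have h1 : 0 < (N' - 2) * (N' - 4 * τ - 10) * ((1 - Pplus N' τ) * (1 - Pminus N' τ)) := by
        calc 0 < 4 * (2 + τ) ^ 2 := by positivity
          _ = _ := by rw [← quadF_one, hQ]; ring
      exact (mem_Ioo_of_mul_sub_neg hPP.le (neg_of_mul_pos_right h1 ha.le)).1
    exact ⟨-((N' - 2) * (N' - 4 * τ - 10)) * (p - Pplus N' τ),
      mul_pos (neg_pos.2 ha) (by linarith), by rw [hQ]; ring⟩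
  · exact ⟨12 * (2 + τ) ^ 2, by positivity, quadF_eq_mul_of_eq (by linarith)⟩

theorem Pminus_lt_lt_Pplus (hτ : -2 < τ) (hgt : 10 + 4 * τ < N') :
    (N' + τ) / (N' - 2) < Pminus N' τ ∧ Pminus N' τ < (N' + 2 + 2 * τ) / (N' - 2) ∧
      (N' + 2 + 2 * τ) / (N' - 2) < Pplus N' τ := by
  have hτ' : 0 < 2 + τ := by linarith
  have hD : 0 < (2 + τ) * (2 * N' + τ - 2) := mul_pos hτ' (by linarith)
  have ha : 0 < (N' - 2) * (N' - 4 * τ - 10) := mul_pos (by linarith) (by linarith)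
  have hQ := quadF_eq_mul hD.le ha.ne'
  have hPP : Pminus N' τ < Pplus N' τ := by
    rw [← sub_pos, Pplus_sub_Pminus (by linarith)]
    have := Real.sqrt_pos.2 hD
    positivity
  have hx : (N' + τ) / (N' - 2) < (N' + 2 + 2 * τ) / (N' - 2) :=
    div_lt_div_of_pos_right (by linarith) (by linarith)
  have h₂ : (N' - 2) * (N' - 4 * τ - 10) * (((N' + 2 + 2 * τ) / (N' - 2) - Pminus N' τ) *
      ((N' + 2 + 2 * τ) / (N' - 2) - Pplus N' τ)) < 0 := by
    calc _ = quadF N' τ ((N' + 2 + 2 * τ) / (N' - 2)) := by rw [hQ]; ring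
      _ = -8 * (2 + τ) ^ 3 / (N' - 2) := quadF_peak_point (by linarith)
      _ < 0 := div_neg_of_neg_of_pos (by nlinarith [pow_pos hτ' 3]) (by linarith)
  have h₁ : 0 < (N' - 2) * (N' - 4 * τ - 10) * (((N' + τ) / (N' - 2) - Pminus N' τ) *
      ((N' + τ) / (N' - 2) - Pplus N' τ)) := by
    calc 0 < (2 + τ) ^ 2 := by positivity
      _ = quadF N' τ ((N' + τ) / (N' - 2)) := (quadF_zero_point (by linarith)).symm
      _ = _ := by rw [hQ]; ring
  obtain ⟨hPminus_lt, hlt_Pplus⟩ := mem_Ioo_of_mul_sub_neg hPP.le (neg_of_mul_neg_right h₂ ha.le)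
  refine ⟨?_, hPminus_lt, hlt_Pplus⟩
  exact (lt_or_lt_of_mul_sub_pos (pos_of_mul_pos_right h₁ ha.le)).resolve_right
    (by linarith)

theorem Pminus_mem_Ioo (hN' : 2 < N') (hτ : -2 < τ) :
    Pminus N' τ ∈ Ioo ((N' + τ) / (N' - 2)) ((N' + 2 + 2 * τ) / (N' - 2)) := by
  rcases le_or_gt N' (10 + 4 * τ) with hle | hgt
  · have hτ' : 0 < 2 + τ := by linarith
    have hx₁ : 1 < (N' + τ) / (N' - 2) := (one_lt_div (by linarith)).2 (by linarith)
    have hx₂ : 1 < (N' + 2 + 2 * τ) / (N' - 2) := (one_lt_div (by linarith)).2 (by linarith)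
    obtain ⟨k₁, hk₁, hQ₁⟩ := quadF_eq_pos_mul_sub hN' hτ hle hx₁.le
    obtain ⟨k₂, hk₂, hQ₂⟩ := quadF_eq_pos_mul_sub hN' hτ hle hx₂.le
    rw [quadF_zero_point (by linarith)] at hQ₁
    rw [quadF_peak_point (by linarith)] at hQ₂
    have h₁ : 0 < k₁ * (Pminus N' τ - (N' + τ) / (N' - 2)) := hQ₁ ▸ by positivity
    have h₂ : k₂ * (Pminus N' τ - (N' + 2 + 2 * τ) / (N' - 2)) < 0 :=
      hQ₂ ▸ div_neg_of_neg_of_pos (by nlinarith [pow_pos hτ' 3]) (by linarith)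
    exact ⟨sub_pos.1 (pos_of_mul_pos_right h₁ hk₁.le), sub_neg.1 (neg_of_mul_neg_right h₂ hk₂.le)⟩
  · obtain ⟨h₁, h₂, -⟩ := Pminus_lt_lt_Pplus hτ hgt
    exact ⟨h₁, h₂⟩

theorem quadF_Pminus_eq_zero (hN' : 2 < N') (hτ : -2 < τ) : quadF N' τ (Pminus N' τ) = 0 := by
  by_cases heq : N' = 4 * τ + 10
  · rw [quadF_eq_mul_of_eq heq, sub_self, mul_zero]
  · have hD : 0 ≤ (2 + τ) * (2 * N' + τ - 2) := mul_nonneg (by linarith) (by linarith)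
    have ha : (N' - 2) * (N' - 4 * τ - 10) ≠ 0 :=
      mul_ne_zero (by linarith) (fun h => heq (by linarith))
    rw [quadF_eq_mul hD ha, sub_self, mul_zero, zero_mul]

end

/-- properties of `f`. Let `N' > 2`, `τ > -2`. Then
`f((N'+τ)/(N'-2)) = 0`; `P₋(N',τ)` lies in `((N'+τ)/(N'-2), (N'+2+2τ)/(N'-2))`
and solves `f(p) = (N'-2)²/4`. If `2 < N' ≤ 10+4τ` then `f < (N'-2)²/4` on
`(1, P₋)` and `f > (N'-2)²/4` on `(P₋, ∞)`. If `N' > 10+4τ` there is a second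
root `P₊(N',τ) ∈ ((N'+2+2τ)/(N'-2), ∞)`, and `f < (N'-2)²/4` on
`(1,P₋) ∪ (P₊,∞)` while `f > (N'-2)²/4` on `(P₋, P₊)`. -/
theorem stmt_19 (N' τ : ℝ) (hN' : 2 < N') (hτ : -2 < τ) :
    fF N' τ ((N' + τ) / (N' - 2)) = 0 ∧
    ((N' + τ) / (N' - 2) < Pminus N' τ ∧
      Pminus N' τ < (N' + 2 + 2 * τ) / (N' - 2) ∧
      fF N' τ (Pminus N' τ) = (N' - 2) ^ 2 / 4) ∧
    (N' ≤ 10 + 4 * τ →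
      (∀ p : ℝ, 1 < p → p < Pminus N' τ → fF N' τ p < (N' - 2) ^ 2 / 4) ∧
      (∀ p : ℝ, Pminus N' τ < p → (N' - 2) ^ 2 / 4 < fF N' τ p)) ∧
    (10 + 4 * τ < N' →
      fF N' τ (Pplus N' τ) = (N' - 2) ^ 2 / 4 ∧
      (N' + 2 + 2 * τ) / (N' - 2) < Pplus N' τ ∧
      (∀ p : ℝ, 1 < p → (p < Pminus N' τ ∨ Pplus N' τ < p) →
        fF N' τ p < (N' - 2) ^ 2 / 4) ∧
      (∀ p : ℝ, Pminus N' τ < p → p < Pplus N' τ →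
        (N' - 2) ^ 2 / 4 < fF N' τ p)) := by
  obtain ⟨hx₁P, hPx₂⟩ := Pminus_mem_Ioo hN' hτ
  have hP : 1 < Pminus N' τ := ((one_lt_div (by linarith)).2 (by linarith)).trans hx₁P
  refine ⟨fF_zero_point (by linarith), ⟨hx₁P, hPx₂, (fF_eq_iff hP).2 (quadF_Pminus_eq_zero hN' hτ)⟩,
    fun hle => ⟨fun p hp hlt => ?_, fun p hlt => ?_⟩, fun hgt => ?_⟩
  · obtain ⟨k, hk, hQ⟩ := quadF_eq_pos_mul_sub hN' hτ hle hp.le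
    rw [fF_lt_iff hp, hQ]
    exact mul_pos hk (sub_pos.2 hlt)
  · obtain ⟨k, hk, hQ⟩ := quadF_eq_pos_mul_sub hN' hτ hle (hP.trans hlt).le
    rw [lt_fF_iff (hP.trans hlt), hQ]
    exact mul_neg_of_pos_of_neg hk (sub_neg.2 hlt)
  · have ha : 0 < (N' - 2) * (N' - 4 * τ - 10) := mul_pos (by linarith) (by linarith)
    have hQ := quadF_eq_mul (mul_nonneg (by linarith) (by linarith)) ha.ne'
    obtain ⟨-, -, hx₂P⟩ := Pminus_lt_lt_Pplus hτ hgt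
    have hP' : 1 < Pplus N' τ := by linarith
    refine ⟨(fF_eq_iff hP').2 (by rw [hQ, sub_self, mul_zero]), hx₂P, ?_, ?_⟩
    · rintro p hp (hlt | hlt) <;> rw [fF_lt_iff hp, hQ]
      · exact mul_pos_of_neg_of_neg (mul_neg_of_pos_of_neg ha (by linarith)) (by linarith)
      · exact mul_pos (mul_pos ha (by linarith)) (by linarith)
    · intro p h₁ h₂
      rw [lt_fF_iff (hP.trans h₁), hQ]
      exact mul_neg_of_pos_of_neg (mul_pos ha (by linarith)) (by linarith)

end
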